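/- Let E_1, E_2 be complex Hilbert spaces and let A, W : E_1 → E_2 be contractions such that 1 + W A* is invertible (equivalently, 1 + A* W is invertible). Then 1 − Ψ_A(W)* Ψ_A(W) = D_A (1 + W* A)^{-1} (1 − W* W) (1 + A* W)^{-1} D_A as operators on E_1. -/

import Mathlib

open ContinuousLinearMap Filter

set_option synthInstance.maxHeartbeats 1000000
set_option maxHeartbeats 1000000


/-- `PiLp` over complete fibers is complete. -/
instance PiLp.instCompleteSpace' (p : ENNReal) [Fact (1 ≤ p)] {ι : Type*} [Fintype ι]
    (β : ι → Type*) [∀ i, NormedAddCommGroup (β i)] [∀ i, CompleteSpace (β i)] :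
    CompleteSpace (PiLp p β) :=
  (UniformEquiv.completeSpace_iff
    { toEquiv := WithLp.equiv p (∀ i, β i)
      uniformContinuous_toFun := PiLp.uniformContinuous_ofLp p β
      uniformContinuous_invFun := PiLp.uniformContinuous_toLp p β }).mpr inferInstance

noncomputable section

variable {E₁ E₂ : Type*} [NormedAddCommGroup E₁] [InnerProductSpace ℂ E₁] [CompleteSpace E₁]
  [NormedAddCommGroup E₂] [InnerProductSpace ℂ E₂] [CompleteSpace E₂]

/-- The defect operator `D_C = (1 - C*C)^(1/2)` of a contraction `C`. -/
def defect (C : E₁ →L[ℂ] E₂) : E₁ →L[ℂ] E₁ := CFC.sqrt (1 - adjoint C ∘L C)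

/-- The defect operator `D_{C*} = (1 - C C*)^(1/2)` of a contraction `C`. -/
def defectStar (C : E₁ →L[ℂ] E₂) : E₂ →L[ℂ] E₂ := CFC.sqrt (1 - C ∘L adjoint C)

/-- The fractional transform `Ψ_A(W) = A + D_{A*} (1 + W A*)⁻¹ W D_A`. -/
def Psi (A W : E₁ →L[ℂ] E₂) : E₁ →L[ℂ] E₂ :=
  A + defectStar A ∘L Ring.inverse (1 + W ∘L adjoint A) ∘L (W ∘L defect A)

/-- The defect space `𝒟_C = closure (D_C E₁)`. -/
def defectSpace (C : E₁ →L[ℂ] E₂) : Submodule ℂ E₁ :=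
  (LinearMap.range (defect C).toLinearMap).topologicalClosure

/-- The defect space `𝒟_{C*} = closure (D_{C*} E₂)`. -/
def defectStarSpace (C : E₁ →L[ℂ] E₂) : Submodule ℂ E₂ :=
  (LinearMap.range (defectStar C).toLinearMap).topologicalClosure

theorem mem_defectSpace (C : E₁ →L[ℂ] E₂) (x : E₁) : defect C x ∈ defectSpace C :=
  Submodule.le_topologicalClosure _ (LinearMap.mem_range_self _ x)

theorem mem_defectStarSpace (C : E₁ →L[ℂ] E₂) (y : E₂) : defectStar C y ∈ defectStarSpace C :=
  Submodule.le_topologicalClosure _ (LinearMap.mem_range_self _ y)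

variable {H : Type*} [NormedAddCommGroup H] [InnerProductSpace ℂ H] [CompleteSpace H] {n : ℕ}

/-- `H^n` with its Hilbert space (ℓ²) structure. -/
abbrev Hn (H : Type*) (n : ℕ) : Type _ := PiLp 2 (fun _ : Fin n => H)

/-- The `i`-th coordinate projection `H^n → H`. -/
def projL (i : Fin n) : Hn H n →L[ℂ] H :=
  ContinuousLinearMap.proj i ∘L
    (PiLp.continuousLinearEquiv 2 ℂ (fun _ : Fin n => H)).toContinuousLinearMap

/-- The `i`-th coordinate inclusion `H → H^n`. -/
def inclL (i : Fin n) : H →L[ℂ] Hn H n :=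
  (PiLp.continuousLinearEquiv 2 ℂ (fun _ : Fin n => H)).symm.toContinuousLinearMap ∘L
    ContinuousLinearMap.pi (fun j => if j = i then ContinuousLinearMap.id ℂ H else 0)

/-- The row operator `H^n → H` associated to an `n`-tuple of operators. -/
def rowOp (T : Fin n → H →L[ℂ] H) : Hn H n →L[ℂ] H := ∑ i, T i ∘L projL i

/-- The row operator `H^n → H`, `(x_1, …, x_n) ↦ Σ z_i x_i`, associated with `z ∈ ℂⁿ`. -/
def rowC (z : EuclideanSpace ℂ (Fin n)) : Hn H n →L[ℂ] H := ∑ i, z i • projL i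

/-- The completely positive map `ρ_T(X) = Σ T_i X T_i^*`. -/
def rho (T : Fin n → H →L[ℂ] H) (X : H →L[ℂ] H) : H →L[ℂ] H :=
  ∑ i, T i ∘L X ∘L adjoint (T i)

/-- The components of a row operator `R : H^n → H`: `R_i = R ∘ ι_i`. -/
def comps (R : Hn H n →L[ℂ] H) : Fin n → H →L[ℂ] H := fun i => R ∘L inclL i

/-- `φ_λ(T) = Ψ_𝛌(−T)` for a tuple `T` and `λ ∈ 𝔹ⁿ`. -/
def phiOp (lam : EuclideanSpace ℂ (Fin n)) (T : Fin n → H →L[ℂ] H) : Hn H n →L[ℂ] H :=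
  Psi (rowC lam) (-(rowOp T))

/-- The full-space characteristic function
`Θ_R(z) = -R + D_{R*} (1 - 𝐳 R*)⁻¹ 𝐳 D_R : H^n → H` of a row contraction `R`. -/
def Theta (R : Hn H n →L[ℂ] H) (z : EuclideanSpace ℂ (Fin n)) : Hn H n →L[ℂ] H :=
  -R + defectStar R ∘L Ring.inverse (1 - rowC z ∘L adjoint R) ∘L (rowC z ∘L defect R)

/-- The involutive automorphism `φ_λ` of the unit ball `𝔹ⁿ`:
`φ_λ(z) = λ - s_λ (1 - ⟨z,λ⟩)⁻¹ (z - (1 - s_λ) P_λ z)`, where `⟨z,λ⟩ = Σ z_i conj λ_i`,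
`s_λ = (1 - |λ|²)^(1/2)` and `P_λ` is the projection onto the span of `λ` (`P_0 = 0`). -/
def ballAut (lam z : EuclideanSpace ℂ (Fin n)) : EuclideanSpace ℂ (Fin n) :=
  lam - ((Real.sqrt (1 - ‖lam‖ ^ 2) : ℂ) * (1 - (inner ℂ lam z : ℂ))⁻¹) •
    (z - ((1 : ℂ) - (Real.sqrt (1 - ‖lam‖ ^ 2) : ℂ)) •
      (((inner ℂ lam z : ℂ) / ((‖lam‖ : ℂ) ^ 2)) • lam))




section AuxiliaryLemmas

open Polynomial in
private lemma key_ring {R : Type*} [Ring R] (a b w : R) (hu : IsUnit (1 + a)) (hv : IsUnit (1 + b)) :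
    1 - Ring.inverse (1 + a) * a - Ring.inverse (1 + b) * b
      - Ring.inverse (1 + b) * (w - b * a) * Ring.inverse (1 + a)
    = Ring.inverse (1 + b) * (1 - w) * Ring.inverse (1 + a) := by
  set N := Ring.inverse (1 + a) with hN
  set P := Ring.inverse (1 + b) with hP
  have hN1 : N * (1 + a) = 1 := Ring.inverse_mul_cancel _ hu
  have hN2 : (1 + a) * N = 1 := Ring.mul_inverse_cancel _ hu
  have hP1 : P * (1 + b) = 1 := Ring.inverse_mul_cancel _ hv
  have ha' : a * (1 + a) = (1 + a) * a := by noncomm_ring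
  have h1 : (1 - N * a - P * b - P * (w - b * a) * N) * (1 + a) = 1 - P * (b + w) := by
    calc (1 - N * a - P * b - P * (w - b * a) * N) * (1 + a)
        = 1 + a - N * (a * (1 + a)) - P * b * (1 + a) - P * (w - b * a) * (N * (1 + a)) := by
          noncomm_ring
      _ = 1 + a - N * ((1 + a) * a) - P * b * (1 + a) - P * (w - b * a) * 1 := by
          rw [ha', hN1]
      _ = 1 + a - N * (1 + a) * a - P * b * (1 + a) - P * (w - b * a) := by noncomm_ring
      _ = 1 + a - 1 * a - P * b * (1 + a) - P * (w - b * a) := by rw [hN1]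
      _ = 1 - P * (b + w) := by noncomm_ring
  have h2 : 1 - P * (b + w) = P * (1 - w) := by
    calc 1 - P * (b + w) = P * (1 + b) - P * (b + w) := by rw [hP1]
      _ = P * (1 - w) := by noncomm_ring
  have h3 : (1 - N * a - P * b - P * (w - b * a) * N) = (1 - P * (b + w)) * N := by
    have h4 := congrArg (· * N) h1
    replace h4 : (1 - N * a - P * b - P * (w - b * a) * N) * (1 + a) * N = (1 - P * (b + w)) * N := h4
    rw [mul_assoc, hN2, mul_one] at h4
    exact h4
  rw [h3, h2]

variable {X Y : Type*} [NormedAddCommGroup X] [InnerProductSpace ℂ X] [CompleteSpace X]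
  [NormedAddCommGroup Y] [InnerProductSpace ℂ Y] [CompleteSpace Y]

private lemma inv_comm (F : X →L[ℂ] Y) (u : X →L[ℂ] X) (v : Y →L[ℂ] Y)
    (hu : IsUnit u) (hv : IsUnit v) (h : v ∘L F = F ∘L u) :
    F ∘L Ring.inverse u = Ring.inverse v ∘L F := by
  ext x
  simp only [comp_apply]
  have hx : u (Ring.inverse u x) = x := by
    have h1 := congrFun (congrArg DFunLike.coe (Ring.mul_inverse_cancel u hu)) x
    simpa [ContinuousLinearMap.mul_apply] using h1
  have hp := congrFun (congrArg DFunLike.coe h) (Ring.inverse u x)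
  simp only [comp_apply] at hp
  rw [hx] at hp
  have h2 : ∀ y : Y, Ring.inverse v (v y) = y := fun y => by
    have h1 := congrFun (congrArg DFunLike.coe (Ring.inverse_mul_cancel v hv)) y
    simpa [ContinuousLinearMap.mul_apply] using h1
  calc F (Ring.inverse u x) = Ring.inverse v (v (F (Ring.inverse u x))) := (h2 _).symm
    _ = Ring.inverse v (F x) := by rw [hp]

private lemma intertwine_pow (B : X →L[ℂ] Y) (S : X →L[ℂ] X) (T : Y →L[ℂ] Y)
    (hBS : B ∘L S = T ∘L B) (n : ℕ) : B ∘L S ^ n = (T ^ n) ∘L B := by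
  induction n with
  | zero => ext x; simp
  | succ n ih =>
    ext x
    have h1 := congrFun (congrArg DFunLike.coe ih)
    have h2 := congrFun (congrArg DFunLike.coe hBS)
    simp only [comp_apply, pow_succ, ContinuousLinearMap.mul_apply] at *
    rw [h1, h2]

open Polynomial in
private lemma intertwine_aeval (B : X →L[ℂ] Y) (S : X →L[ℂ] X) (T : Y →L[ℂ] Y)
    (hBS : B ∘L S = T ∘L B) (q : Polynomial ℝ) :
    B ∘L aeval S q = aeval T q ∘L B := by
  ext x
  rw [Polynomial.aeval_eq_sum_range (p := q) S, Polynomial.aeval_eq_sum_range (p := q) T]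
  simp only [comp_apply, ContinuousLinearMap.sum_apply, ContinuousLinearMap.smul_apply, map_sum]
  refine Finset.sum_congr rfl fun i _ => ?_
  have h3 := congrFun (congrArg DFunLike.coe (intertwine_pow B S T hBS i)) x
  simp only [comp_apply] at h3
  rw [map_smul_of_tower, h3]

private lemma exists_poly_near (M : ℝ) (f : ℝ → ℝ) (hf : Continuous f) {ε : ℝ} (hε : 0 < ε) :
    ∃ q : Polynomial ℝ, ∀ x ∈ Set.Icc (-M) M, |f x - q.eval x| ≤ ε := by
  set I : Set ℝ := Set.Icc (-M) M
  set f' : C(I, ℝ) := (ContinuousMap.mk f hf).restrict I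
  have hmem : f' ∈ closure (polynomialFunctions I : Set C(I, ℝ)) := by
    have h := polynomialFunctions_closure_eq_top (-M) M
    rw [← Subalgebra.topologicalClosure_coe]
    rw [h]
    trivial
  obtain ⟨g, hg, hdist⟩ := Metric.mem_closure_iff.mp hmem ε hε
  rw [polynomialFunctions_coe] at hg
  obtain ⟨q, rfl⟩ := hg
  refine ⟨q, fun x hx => ?_⟩
  have h5 := ContinuousMap.dist_apply_le_dist (f := f') (g := q.toContinuousMapOnAlgHom I) ⟨x, hx⟩
  have h2 : dist (f' ⟨x, hx⟩) ((q.toContinuousMapOnAlgHom I) ⟨x, hx⟩) ≤ ε :=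
    h5.trans hdist.le
  simpa [Real.dist_eq, f', Polynomial.toContinuousMapOnAlgHom_apply,
    Polynomial.toContinuousMapOn_apply, Polynomial.toContinuousMap_apply] using h2

private lemma intertwine_cfc (B : X →L[ℂ] Y) (S : X →L[ℂ] X) (T : Y →L[ℂ] Y)
    (hS : IsSelfAdjoint S) (hT : IsSelfAdjoint T) (hBS : B ∘L S = T ∘L B)
    (f : ℝ → ℝ) (hf : Continuous f) :
    B ∘L cfc f S = cfc f T ∘L B := by
  set M : ℝ := max ‖S‖ ‖T‖ with hM
  have hσS : spectrum ℝ S ⊆ Set.Icc (-M) M := fun x hx => by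
    have h := spectrum.norm_le_norm_mul_of_mem hx
    rw [Real.norm_eq_abs] at h
    have h1 : ‖(1 : X →L[ℂ] X)‖ ≤ 1 := by
      rw [ContinuousLinearMap.one_def]; exact ContinuousLinearMap.norm_id_le
    have h6 : |x| ≤ ‖S‖ := h.trans (by nlinarith [norm_nonneg S, norm_nonneg (1 : X →L[ℂ] X)])
    exact abs_le.mp (h6.trans (le_max_left _ _))
  have hσT : spectrum ℝ T ⊆ Set.Icc (-M) M := fun x hx => by
    have h := spectrum.norm_le_norm_mul_of_mem hx
    rw [Real.norm_eq_abs] at h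
    have h1 : ‖(1 : Y →L[ℂ] Y)‖ ≤ 1 := by
      rw [ContinuousLinearMap.one_def]; exact ContinuousLinearMap.norm_id_le
    have h6 : |x| ≤ ‖T‖ := h.trans (by nlinarith [norm_nonneg T, norm_nonneg (1 : Y →L[ℂ] Y)])
    exact abs_le.mp (h6.trans (le_max_right _ _))
  rw [← sub_eq_zero, ← norm_le_zero_iff]
  refine le_of_forall_pos_le_add (fun ε hε => ?_)
  rw [zero_add]
  have hε4 : 0 < ε / (2 * (‖B‖ + 1)) := by positivity
  obtain ⟨q, hq⟩ := exists_poly_near M f hf hε4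
  set δ := ε / (2 * (‖B‖ + 1))
  have hq' : B ∘L cfc q.eval S = cfc q.eval T ∘L B := by
    rw [cfc_polynomial q S hS, cfc_polynomial q T hT]
    exact intertwine_aeval B S T hBS q
  have key : B ∘L cfc f S - cfc f T ∘L B
      = B ∘L (cfc f S - cfc q.eval S) - (cfc f T - cfc q.eval T) ∘L B := by
    rw [ContinuousLinearMap.comp_sub, ContinuousLinearMap.sub_comp, hq']
    abel
  have hnS : ‖cfc f S - cfc q.eval S‖ ≤ δ := by
    rw [← cfc_sub f q.eval S (hf.continuousOn) (q.continuous_aeval.continuousOn)]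
    exact norm_cfc_le hε4.le (fun x hx => by
      simpa [Real.norm_eq_abs] using hq x (hσS hx))
  have hnT : ‖cfc f T - cfc q.eval T‖ ≤ δ := by
    rw [← cfc_sub f q.eval T (hf.continuousOn) (q.continuous_aeval.continuousOn)]
    exact norm_cfc_le hε4.le (fun x hx => by
      simpa [Real.norm_eq_abs] using hq x (hσT hx))
  rw [key]
  have b1 : ‖B ∘L (cfc f S - cfc q.eval S)‖ ≤ ‖B‖ * δ :=
    (opNorm_comp_le _ _).trans (mul_le_mul_of_nonneg_left hnS (norm_nonneg B))
  have b2 : ‖(cfc f T - cfc q.eval T) ∘L B‖ ≤ δ * ‖B‖ :=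
    (opNorm_comp_le _ _).trans (mul_le_mul_of_nonneg_right hnT (norm_nonneg B))
  have hδε : 2 * (‖B‖ + 1) * δ = ε := by
    show 2 * (‖B‖ + 1) * (ε / (2 * (‖B‖ + 1))) = ε
    rw [mul_div_cancel₀]
    positivity
  calc ‖B ∘L (cfc f S - cfc q.eval S) - (cfc f T - cfc q.eval T) ∘L B‖
      ≤ ‖B ∘L (cfc f S - cfc q.eval S)‖ + ‖(cfc f T - cfc q.eval T) ∘L B‖ := norm_sub_le _ _
    _ ≤ ‖B‖ * δ + δ * ‖B‖ := add_le_add b1 b2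
    _ = 2 * ‖B‖ * δ := by ring
    _ ≤ 2 * (‖B‖ + 1) * δ := by nlinarith [hε4.le, norm_nonneg B]
    _ = ε := hδε

open scoped InnerProductSpace in
private lemma contraction_nonneg (A : X →L[ℂ] Y) (hA : ‖A‖ ≤ 1) :
    (0 : X →L[ℂ] X) ≤ 1 - adjoint A ∘L A := by
  rw [ContinuousLinearMap.nonneg_iff_isPositive]
  constructor
  · intro x y
    simp [inner_sub_left, inner_sub_right, adjoint_inner_left, adjoint_inner_right]
  · intro x
    simp only [reApplyInnerSelf, sub_apply, comp_apply, one_apply_eq_self, inner_sub_left,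
      adjoint_inner_left]
    rw [map_sub]
    have e1 : RCLike.re (⟪A x, A x⟫_ℂ) = ‖A x‖ ^ 2 := inner_self_eq_norm_sq (𝕜 := ℂ) (A x)
    have e2 : RCLike.re (⟪x, x⟫_ℂ) = ‖x‖ ^ 2 := inner_self_eq_norm_sq (𝕜 := ℂ) x
    rw [e1, e2]
    have h3 : ‖A x‖ ≤ ‖x‖ := by
      calc ‖A x‖ ≤ ‖A‖ * ‖x‖ := A.le_opNorm x
      _ ≤ 1 * ‖x‖ := by gcongr
      _ = ‖x‖ := one_mul _
    nlinarith [norm_nonneg (A x), norm_nonneg x]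

private lemma sqrt_eq_cfc (S : X →L[ℂ] X) (h0 : (0 : X →L[ℂ] X) ≤ S) :
    CFC.sqrt S = cfc Real.sqrt S := by
  refine CFC.sqrt_unique ?_ ?_
  · rw [← cfc_mul ..]
    have h : ∀ x ∈ spectrum ℝ S, Real.sqrt x * Real.sqrt x = x := fun x hx =>
      Real.mul_self_sqrt (spectrum_nonneg_of_nonneg h0 hx)
    rw [cfc_congr h, cfc_id' ℝ S]
  · exact cfc_nonneg fun x _ => Real.sqrt_nonneg x

end AuxiliaryLemmas

/-- `1 - Ψ_A(W)* Ψ_A(W) = D_A (1 + W*A)⁻¹ (1 - W*W) (1 + A*W)⁻¹ D_A`. -/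
theorem statement2 (A W : E₁ →L[ℂ] E₂) (hA : ‖A‖ ≤ 1) (hW : ‖W‖ ≤ 1)
    (h1 : IsUnit ((1 : E₂ →L[ℂ] E₂) + W ∘L adjoint A))
    (h2 : IsUnit ((1 : E₁ →L[ℂ] E₁) + adjoint A ∘L W)) :
    1 - adjoint (Psi A W) ∘L Psi A W =
      defect A ∘L Ring.inverse (1 + adjoint W ∘L A) ∘L
        ((1 - adjoint W ∘L W) ∘L (Ring.inverse (1 + adjoint A ∘L W) ∘L defect A)) := by
  classical
  -- positivity of defect squares
  have h0S : (0 : E₁ →L[ℂ] E₁) ≤ 1 - adjoint A ∘L A := contraction_nonneg A hA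
  have h0T : (0 : E₂ →L[ℂ] E₂) ≤ 1 - A ∘L adjoint A := by
    have hA' : ‖adjoint A‖ ≤ 1 := by
      rw [show ‖adjoint A‖ = ‖A‖ from ContinuousLinearMap.adjoint.norm_map A]
      exact hA
    have h := contraction_nonneg (adjoint A) hA'
    rwa [adjoint_adjoint] at h
  have hSsa : IsSelfAdjoint ((1 : E₁ →L[ℂ] E₁) - adjoint A ∘L A) := .of_nonneg h0S
  have hTsa : IsSelfAdjoint ((1 : E₂ →L[ℂ] E₂) - A ∘L adjoint A) := .of_nonneg h0T
  have hDsa : adjoint (defect A) = defect A := by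
    rw [← star_eq_adjoint]
    exact IsSelfAdjoint.of_nonneg (CFC.sqrt_nonneg _)
  have hD'sa : adjoint (defectStar A) = defectStar A := by
    rw [← star_eq_adjoint]
    exact IsSelfAdjoint.of_nonneg (CFC.sqrt_nonneg _)
  have hD2 : defect A ∘L defect A = 1 - adjoint A ∘L A := by
    rw [defect, ← ContinuousLinearMap.mul_def]
    exact CFC.sqrt_mul_sqrt_self _ h0S
  have hD'2 : defectStar A ∘L defectStar A = 1 - A ∘L adjoint A := by
    rw [defectStar, ← ContinuousLinearMap.mul_def]
    exact CFC.sqrt_mul_sqrt_self _ h0T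
  have hAD : A ∘L defect A = defectStar A ∘L A := by
    rw [defect, defectStar, sqrt_eq_cfc _ h0S, sqrt_eq_cfc _ h0T]
    exact intertwine_cfc A _ _ hSsa hTsa (by ext x; simp) Real.sqrt Real.continuous_sqrt
  have hDA : defect A ∘L adjoint A = adjoint A ∘L defectStar A := by
    have h := congrArg (fun (T : E₁ →L[ℂ] E₂) => adjoint T) hAD
    simp only [adjoint_comp, adjoint_adjoint, hDsa, hD'sa] at h
    exact h
  -- units
  have hstar1 : star ((1 : E₁ →L[ℂ] E₁) + adjoint A ∘L W) = 1 + adjoint W ∘L A := by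
    rw [star_add, star_one, star_eq_adjoint, adjoint_comp, adjoint_adjoint]
  have hv : IsUnit ((1 : E₁ →L[ℂ] E₁) + adjoint W ∘L A) := by
    rw [← hstar1]; exact h2.star
  have hstar2 : star ((1 : E₂ →L[ℂ] E₂) + W ∘L adjoint A) = 1 + A ∘L adjoint W := by
    rw [star_add, star_one, star_eq_adjoint, adjoint_comp, adjoint_adjoint]
  have h1' : IsUnit ((1 : E₂ →L[ℂ] E₂) + A ∘L adjoint W) := by
    rw [← hstar2]; exact h1.star
  have hadjM : adjoint (Ring.inverse ((1 : E₂ →L[ℂ] E₂) + W ∘L adjoint A))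
      = Ring.inverse ((1 : E₂ →L[ℂ] E₂) + A ∘L adjoint W) := by
    rw [← star_eq_adjoint, ← Ring.inverse_star, hstar2]
  -- commutation with inverses
  have c1 : W ∘L Ring.inverse (1 + adjoint A ∘L W) = Ring.inverse (1 + W ∘L adjoint A) ∘L W :=
    inv_comm W _ _ h2 h1 (by ext x; simp)
  have c2 : adjoint A ∘L Ring.inverse (1 + W ∘L adjoint A)
      = Ring.inverse (1 + adjoint A ∘L W) ∘L adjoint A :=
    inv_comm (adjoint A) _ _ h1 h2 (by ext x; simp)
  have c3 : adjoint W ∘L Ring.inverse (1 + A ∘L adjoint W)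
      = Ring.inverse (1 + adjoint W ∘L A) ∘L adjoint W :=
    inv_comm (adjoint W) _ _ h1' hv (by ext x; simp)
  have c4 : A ∘L Ring.inverse (1 + adjoint W ∘L A)
      = Ring.inverse (1 + A ∘L adjoint W) ∘L A :=
    inv_comm A _ _ hv h1' (by ext x; simp)
  have c5 : (adjoint W ∘L A) ∘L Ring.inverse (1 + adjoint W ∘L A)
      = Ring.inverse (1 + adjoint W ∘L A) ∘L (adjoint W ∘L A) :=
    inv_comm (adjoint W ∘L A) _ _ hv hv (by ext x; simp)
  have c6 : (adjoint A ∘L W) ∘L Ring.inverse (1 + adjoint A ∘L W)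
      = Ring.inverse (1 + adjoint A ∘L W) ∘L (adjoint A ∘L W) :=
    inv_comm (adjoint A ∘L W) _ _ h2 h2 (by ext x; simp)
  -- pointwise versions
  have p1 : ∀ y, adjoint A (defectStar A y) = defect A (adjoint A y) := fun y => by
    have h := congrFun (congrArg DFunLike.coe hDA) y
    simp only [comp_apply] at h
    exact h.symm
  have p2 : ∀ x, defectStar A (A x) = A (defect A x) := fun x => by
    have h := congrFun (congrArg DFunLike.coe hAD) x
    simp only [comp_apply] at h
    exact h.symm
  have p3 : ∀ y, adjoint A (Ring.inverse ((1 : E₂ →L[ℂ] E₂) + W ∘L adjoint A) y)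
      = Ring.inverse ((1 : E₁ →L[ℂ] E₁) + adjoint A ∘L W) (adjoint A y) := fun y => by
    have h := congrFun (congrArg DFunLike.coe c2) y
    simpa only [comp_apply] using h
  have p4 : ∀ y, Ring.inverse ((1 : E₂ →L[ℂ] E₂) + W ∘L adjoint A) (W y)
      = W (Ring.inverse ((1 : E₁ →L[ℂ] E₁) + adjoint A ∘L W) y) := fun y => by
    have h := congrFun (congrArg DFunLike.coe c1) y
    simp only [comp_apply] at h
    exact h.symm
  have p5 : ∀ y, adjoint W (Ring.inverse ((1 : E₂ →L[ℂ] E₂) + A ∘L adjoint W) y)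
      = Ring.inverse ((1 : E₁ →L[ℂ] E₁) + adjoint W ∘L A) (adjoint W y) := fun y => by
    have h := congrFun (congrArg DFunLike.coe c3) y
    simpa only [comp_apply] using h
  have p6 : ∀ y, Ring.inverse ((1 : E₂ →L[ℂ] E₂) + A ∘L adjoint W) (A y)
      = A (Ring.inverse ((1 : E₁ →L[ℂ] E₁) + adjoint W ∘L A) y) := fun y => by
    have h := congrFun (congrArg DFunLike.coe c4) y
    simp only [comp_apply] at h
    exact h.symm
  have p7 : ∀ y, defectStar A (defectStar A y) = y - A (adjoint A y) := fun y => by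
    have h := congrFun (congrArg DFunLike.coe hD'2) y
    simpa only [comp_apply, sub_apply, one_apply_eq_self] using h
  have p8 : ∀ x, defect A (defect A x) = x - adjoint A (A x) := fun x => by
    have h := congrFun (congrArg DFunLike.coe hD2) x
    simpa only [comp_apply, sub_apply, one_apply_eq_self] using h
  have p9 : ∀ y, adjoint W (A (Ring.inverse ((1 : E₁ →L[ℂ] E₁) + adjoint W ∘L A) y))
      = Ring.inverse ((1 : E₁ →L[ℂ] E₁) + adjoint W ∘L A) (adjoint W (A y)) := fun y => by
    have h := congrFun (congrArg DFunLike.coe c5) y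
    simpa only [comp_apply] using h
  have p10 : ∀ y, adjoint A (W (Ring.inverse ((1 : E₁ →L[ℂ] E₁) + adjoint A ∘L W) y))
      = Ring.inverse ((1 : E₁ →L[ℂ] E₁) + adjoint A ∘L W) (adjoint A (W y)) := fun y => by
    have h := congrFun (congrArg DFunLike.coe c6) y
    simpa only [comp_apply] using h
  -- expansion of Psi and its adjoint
  have hPsiE : Psi A W
      = A + defectStar A ∘L (Ring.inverse (1 + W ∘L adjoint A) ∘L (W ∘L defect A)) := rfl
  have hPsiA : adjoint (Psi A W)
      = adjoint A + defect A ∘L (adjoint W ∘L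
          (Ring.inverse ((1 : E₂ →L[ℂ] E₂) + A ∘L adjoint W) ∘L defectStar A)) := by
    rw [hPsiE, map_add]
    congr 1
    rw [adjoint_comp, adjoint_comp, adjoint_comp, hadjM, hDsa, hD'sa]
    ext x
    simp only [comp_apply]
  -- the main factorization
  have main : 1 - adjoint (Psi A W) ∘L Psi A W
      = defect A ∘L ((1 - Ring.inverse (1 + adjoint A ∘L W) * (adjoint A ∘L W)
          - Ring.inverse (1 + adjoint W ∘L A) * (adjoint W ∘L A)
          - Ring.inverse (1 + adjoint W ∘L A)
              * ((adjoint W ∘L W) - (adjoint W ∘L A) * (adjoint A ∘L W))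
              * Ring.inverse (1 + adjoint A ∘L W)) ∘L defect A) := by
    rw [hPsiA, hPsiE]
    ext x
    simp only [comp_apply, add_apply, sub_apply, one_apply_eq_self, ContinuousLinearMap.mul_apply,
      map_add, map_sub, p1, p2, p3, p4, p5, p6, p7, p8, p9, p10]
    abel
  rw [main, key_ring (adjoint A ∘L W) (adjoint W ∘L A) (adjoint W ∘L W) h2 hv]
  ext x
  simp only [comp_apply, ContinuousLinearMap.mul_apply, sub_apply, one_apply_eq_self]

end
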